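/- Let n ≥ 2 and let K_{n−1} be the poset [n−1] ⊕ ([1] ⊔ [1]) ⊕ [n−1]. Then the poset [2] × K_{n−1} has exactly (n+2)(2n+1) lower sets. -/

import Mathlib

/-- The reverse operator `𝔛` on lower sets of a poset: the lower set generated by
the minimal elements of the complement. -/
def XRev {α : Type*} [PartialOrder α] (I : Set α) : Set α :=
  {x | ∃ y, Minimal (fun z => z ∈ Iᶜ) y ∧ x ≤ y}

/-- The `𝔛`-orbit of a lower set `I` of a finite poset (forward iteration; since
`𝔛` is a bijection on lower sets of a finite poset, this is the full orbit). -/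
def XOrbit {α : Type*} [PartialOrder α] (I : Set α) : Set (Set α) :=
  {J | ∃ k : ℕ, XRev^[k] I = J}

/-- The lower set of `[2] × P` corresponding to a pair `(I₁, I₂)` of lower sets
of `P` with `I₂ ⊆ I₁`: coordinate `0` (the bottom of the chain `[2]`) carries
`I₁` and coordinate `1` carries `I₂`. -/
def pairSet {β : Type*} (I₁ I₂ : Set β) : Set (Fin 2 × β) :=
  {p | if p.1 = 0 then p.2 ∈ I₁ else p.2 ∈ I₂}

/-- The poset `K_{n-1} = [n-1] ⊕ ([1] ⊔ [1]) ⊕ [n-1]`, realized as pairs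
`(rank, tag)` with `1 ≤ rank ≤ 2n-1`, where only rank `n` carries two elements
(tags `false` for `n` and `true` for `n′`). -/
def KType (n : ℕ) : Type :=
  {p : ℕ × Bool // 1 ≤ p.1 ∧ p.1 ≤ 2 * n - 1 ∧ (p.1 ≠ n → p.2 = false)}

/-- In `K_{n-1}`, `x ≤ y` iff `x = y` or `x` has strictly smaller rank. -/
instance (n : ℕ) : PartialOrder (KType n) where
  le x y := x = y ∨ x.1.1 < y.1.1
  le_refl x := Or.inl rfl
  le_trans x y z hxy hyz := by
    rcases hxy with rfl | h
    · exact hyz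
    · rcases hyz with rfl | h'
      · exact Or.inr h
      · exact Or.inr (h.trans h')
  le_antisymm x y hxy hyx := by
    rcases hxy with rfl | h
    · rfl
    · rcases hyx with rfl | h'
      · rfl
      · omega

/-- The rank-level lower set `L_j` of `K_{n-1}`. -/
def KL (n : ℕ) (j : ℕ) : Set (KType n) := {x | x.1.1 ≤ j}

/-- The lower set `I_n = {1, …, n-1, n}` of `K_{n-1}`. -/
def KIn (n : ℕ) : Set (KType n) := {x | x.1.1 < n ∨ x.1 = (n, false)}

/-- The lower set `I_{n′} = {1, …, n-1, n′}` of `K_{n-1}`. -/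
def KIn' (n : ℕ) : Set (KType n) := {x | x.1.1 < n ∨ x.1 = (n, true)}

/-!
Lower sets of `[2] × P` are pairs `I₂ ⊆ I₁` of lower sets of `P`. The `2n + 2` lower sets
`L_0 ⊂ ⋯ ⊂ L_{n-1} ⊂ I_n, I_{n′} ⊂ L_n ⊂ ⋯ ⊂ L_{2n-1}` of `K_{n-1}` form a chain except that
`I_n` and `I_{n′}` are incomparable, so the number of such pairs is
`(2n + 3).choose 2 - 1 = (n + 2)(2n + 1)`.
-/

open Set

section FinTwoProd

variable {β : Type*}

theorem pairSet_injective : Function.Injective fun p : Set β × Set β => pairSet p.1 p.2 := by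
  intro p q h
  have hmem (i : Fin 2) (x : β) := Set.ext_iff.1 h (i, x)
  ext x
  · simpa [pairSet] using hmem 0 x
  · simpa [pairSet] using hmem 1 x

theorem pairSet_slices (I : Set (Fin 2 × β)) : pairSet {x | (0, x) ∈ I} {x | (1, x) ∈ I} = I := by
  ext ⟨i, x⟩
  fin_cases i <;> simp [pairSet]

theorem isLowerSet_pairSet_iff [Preorder β] {I₁ I₂ : Set β} :
    IsLowerSet (pairSet I₁ I₂) ↔ IsLowerSet I₁ ∧ IsLowerSet I₂ ∧ I₂ ⊆ I₁ := by
  refine ⟨fun h => ⟨fun x y hyx hx => ?_, fun x y hyx hx => ?_, fun x hx => ?_⟩, ?_⟩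
  · exact h (show ((0 : Fin 2), y) ≤ (0, x) from ⟨le_rfl, hyx⟩) hx
  · exact h (show ((1 : Fin 2), y) ≤ (1, x) from ⟨le_rfl, hyx⟩) hx
  · exact h (show ((0 : Fin 2), x) ≤ (1, x) from ⟨Fin.zero_le _, le_rfl⟩) hx
  · rintro ⟨h₁, h₂, h₂₁⟩ ⟨i, x⟩ ⟨j, y⟩ ⟨hji, hyx⟩ hx
    fin_cases i <;> fin_cases j
    · exact h₁ hyx hx
    · simp at hji
    · exact h₁ hyx (h₂₁ hx)
    · exact h₂ hyx hx

theorem ncard_isLowerSet_fin_two_prod [Preorder β] :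
    {I : Set (Fin 2 × β) | IsLowerSet I}.ncard =
      {p : Set β × Set β | IsLowerSet p.1 ∧ IsLowerSet p.2 ∧ p.2 ⊆ p.1}.ncard := by
  rw [← pairSet_injective.injOn.ncard_image]
  congr
  ext I
  refine ⟨fun hI => ⟨({x | (0, x) ∈ I}, {x | (1, x) ∈ I}), isLowerSet_pairSet_iff.1 ?_,
    pairSet_slices I⟩, ?_⟩
  · rwa [pairSet_slices]
  · rintro ⟨p, hp, rfl⟩
    exact isLowerSet_pairSet_iff.2 hp

end FinTwoProd

theorem ncard_le_pairs {α : Type*} [LinearOrder α] [Finite α] :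
    {p : α × α | p.2 ≤ p.1}.ncard = (Nat.card α + 1).choose 2 := by
  rw [← Nat.card_coe_set_eq, ← Sym2.natCard]
  exact Nat.card_congr (((Equiv.prodComm α α).subtypeEquiv fun _ => Iff.rfl).trans
    Sym2.sortEquiv.symm)

theorem ncard_le_pairs_of_lt (N : ℕ) :
    {q : ℕ × ℕ | q.2 ≤ q.1 ∧ q.1 < N}.ncard = (N + 1).choose 2 := by
  have himage : Prod.map Fin.val Fin.val '' {p : Fin N × Fin N | p.2 ≤ p.1} =
      {q : ℕ × ℕ | q.2 ≤ q.1 ∧ q.1 < N} := by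
    ext ⟨k, l⟩
    refine ⟨?_, fun ⟨hlk, hk⟩ => ⟨(⟨k, hk⟩, ⟨l, by omega⟩), hlk, rfl⟩⟩
    rintro ⟨⟨k, l⟩, hlk, h⟩
    simp only [Prod.map, Prod.mk.injEq] at h
    obtain ⟨rfl, rfl⟩ := h
    exact ⟨hlk, k.2⟩
  rw [← himage, (Fin.val_injective.prodMap Fin.val_injective).injOn.ncard_image, ncard_le_pairs,
    Nat.card_fin]

namespace KType

variable {n : ℕ}

theorem rank_eq_of_snd {x : KType n} (hx : x.1.2 = true) : x.1.1 = n := by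
  by_contra hne
  simpa [hx] using x.2.2.2 hne

theorem le_iff_rank_le_of_snd_eq {x y : KType n} (h : x.1.2 = y.1.2) :
    x ≤ y ↔ x.1.1 ≤ y.1.1 := by
  change x = y ∨ _ ↔ _
  rw [show x = y ↔ x.1 = y.1 from Subtype.ext_iff, Prod.ext_iff]
  simp only [h, and_true]
  omega

theorem lt_of_rank_lt {x y : KType n} (h : x.1.1 < y.1.1) : x < y :=
  lt_of_le_of_ne (Or.inr h) (by rintro rfl; omega)

def ofRank (r : ℕ) (h₁ : 1 ≤ r) (h₂ : r ≤ 2 * n - 1) : KType n :=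
  ⟨(r, false), h₁, h₂, fun _ => rfl⟩

def nPrime (hn : 1 ≤ n) : KType n :=
  ⟨(n, true), hn, by omega, fun h => (h rfl).elim⟩

theorem eq_nPrime (hn : 1 ≤ n) {x : KType n} (hx : x.1.2 = true) : x = nPrime hn :=
  Subtype.ext (Prod.ext (rank_eq_of_snd hx) hx)

end KType

open KType

/-- `KLower n k` for `k = 0, …, 2n+1` lists the lower sets of `K_{n-1}` along a linear extension
of inclusion: `L_k` for `k < n`, then `I_n`, `I_{n′}`, and `L_{k-2}` for `k ≥ n + 2`. -/
def KLower (n k : ℕ) : Set (KType n) :=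
  {x | if x.1.2 then n < k else x.1.1 ≤ k ∧ (n < k → x.1.1 + 2 ≤ k)}

variable {n : ℕ}

theorem mem_KLower {k : ℕ} {x : KType n} :
    x ∈ KLower n k ↔ if x.1.2 then n < k else x.1.1 ≤ k ∧ (n < k → x.1.1 + 2 ≤ k) :=
  Iff.rfl

theorem isLowerSet_KLower (k : ℕ) : IsLowerSet (KLower n k) := by
  rintro y x (rfl | hxy) hy
  · exact hy
  rw [mem_KLower] at hy ⊢
  split_ifs at hy ⊢ with hxt hyt hyt
  · exact hy
  · have := rank_eq_of_snd hxt
    omega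
  · have := rank_eq_of_snd hyt
    omega
  · omega

theorem nPrime_mem_KLower (hn : 1 ≤ n) {k : ℕ} : nPrime hn ∈ KLower n k ↔ n < k := by
  rw [mem_KLower]
  simp [nPrime]

theorem ofRank_mem_KLower {r k : ℕ} {h₁ : 1 ≤ r} {h₂ : r ≤ 2 * n - 1} :
    ofRank r h₁ h₂ ∈ KLower n k ↔ r ≤ k ∧ (n < k → r + 2 ≤ k) := by
  rw [mem_KLower]
  simp [ofRank]

theorem KLower_subset_KLower_iff (hn : 1 ≤ n) {k l : ℕ} (hk : k < 2 * n + 2) :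
    KLower n k ⊆ KLower n l ↔ k ≤ l ∧ ¬(k = n ∧ l = n + 1) := by
  refine ⟨fun h => ?_, fun hkl x hx => ?_⟩
  -- test the inclusion on `n′` and on the unprimed element of largest rank in `KLower n k`
  · have hprime (hnk : n < k) : n < l :=
      (nPrime_mem_KLower hn).1 (h ((nPrime_mem_KLower hn).2 hnk))
    have hrank (m : ℕ) (h₁ : 1 ≤ m) (h₂ : m ≤ 2 * n - 1) (hm : m ≤ k ∧ (n < k → m + 2 ≤ k)) :
        m ≤ l ∧ (n < l → m + 2 ≤ l) :=
      (ofRank_mem_KLower (h₁ := h₁) (h₂ := h₂)).1 (h (ofRank_mem_KLower.2 hm))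
    rcases (show k = 0 ∨ (1 ≤ k ∧ k ≤ n) ∨ n < k by omega) with rfl | ⟨hk₁, hkn⟩ | hnk
    · omega
    · have := hrank k hk₁ (by omega) (by omega)
      omega
    · have hnl := hprime hnk
      refine ⟨?_, by omega⟩
      by_contra hlk
      have := hrank (k - 2) (by omega) (by omega) (by omega)
      omega
  · simp only [mem_KLower] at hx ⊢
    split_ifs at * <;> omega

theorem exists_KLower_eq (hn : 2 ≤ n) {I : Set (KType n)} (hI : IsLowerSet I) :
    ∃ k < 2 * n + 2, KLower n k = I := by
  classical
  set a := Nat.findGreatest (fun r => ∃ x ∈ I, x.1 = (r, false)) (2 * n - 1)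
  have ha : a ≤ 2 * n - 1 := Nat.findGreatest_le _
  have exists_mem_rank_a (hpos : 0 < a) : ∃ y ∈ I, y.1 = (a, false) := by
    obtain ⟨_, _, hm, hP⟩ := Nat.findGreatest_pos.1 hpos
    exact Nat.findGreatest_spec (P := fun r => ∃ x ∈ I, x.1 = (r, false)) hm hP
  have mem_iff {x : KType n} (hx : x.1.2 = false) : x ∈ I ↔ x.1.1 ≤ a := by
    refine ⟨fun hxI => Nat.le_findGreatest x.2.2.1 ⟨x, hxI, Prod.ext rfl hx⟩, fun hxa => ?_⟩
    obtain ⟨y, hyI, hy⟩ := exists_mem_rank_a (x.2.1.trans hxa)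
    exact hI ((le_iff_rank_le_of_snd_eq (by rw [hx, hy])).2 (by rw [hy]; exact hxa)) hyI
  have hn₁ : 1 ≤ n := by omega
  have le_a_of_mem (h : nPrime hn₁ ∈ I) : n - 1 ≤ a :=
    (mem_iff (x := ofRank (n - 1) (by omega) (by omega)) rfl).1
      (hI (lt_of_rank_lt (by simp [ofRank, nPrime]; omega)).le h)
  have a_le_of_not_mem (h : nPrime hn₁ ∉ I) : a ≤ n := by
    by_contra! hna
    obtain ⟨y, hyI, hy⟩ := exists_mem_rank_a (by omega)
    exact h (hI (lt_of_rank_lt (by simp [nPrime, hy]; omega)).le hyI)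
  refine ⟨if nPrime hn₁ ∈ I then a + 2 else a, by split_ifs <;> omega, ?_⟩
  ext x
  cases hx : x.1.2
  · rw [mem_iff hx, mem_KLower, hx]
    by_cases h : nPrime hn₁ ∈ I
    · have := le_a_of_mem h
      simp only [if_pos h, Bool.false_eq_true, if_false]
      omega
    · have := a_le_of_not_mem h
      simp only [if_neg h, Bool.false_eq_true, if_false]
      omega
  · rw [eq_nPrime hn₁ hx, nPrime_mem_KLower]
    by_cases h : nPrime hn₁ ∈ I
    · rw [if_pos h]
      exact iff_of_true (by have := le_a_of_mem h; omega) h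
    · rw [if_neg h]
      exact iff_of_false (by have := a_le_of_not_mem h; omega) h

theorem injOn_KLower (hn : 1 ≤ n) : (Iio (2 * n + 2)).InjOn (KLower n) := fun _ hk _ hl h =>
  le_antisymm ((KLower_subset_KLower_iff hn hk).1 h.le).1
    ((KLower_subset_KLower_iff hn hl).1 h.ge).1

theorem image_KLower_pairs (hn : 2 ≤ n) :
    Prod.map (KLower n) (KLower n) '' ({q : ℕ × ℕ | q.2 ≤ q.1 ∧ q.1 < 2 * n + 2} \ {(n + 1, n)}) =
      {p : Set (KType n) × Set (KType n) | IsLowerSet p.1 ∧ IsLowerSet p.2 ∧ p.2 ⊆ p.1} := by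
  ext ⟨I₁, I₂⟩
  constructor
  · rintro ⟨⟨k, l⟩, ⟨⟨hlk, hk⟩, hne⟩, hq⟩
    simp only [Prod.map, Prod.mk.injEq] at hq
    obtain ⟨rfl, rfl⟩ := hq
    simp only [mem_singleton_iff, Prod.mk.injEq] at hne
    exact ⟨isLowerSet_KLower k, isLowerSet_KLower l,
      (KLower_subset_KLower_iff (by omega) (by omega)).2 ⟨hlk, by omega⟩⟩
  · rintro ⟨h₁, h₂, h₂₁⟩
    obtain ⟨k, hk, rfl⟩ := exists_KLower_eq hn h₁
    obtain ⟨l, hl, rfl⟩ := exists_KLower_eq hn h₂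
    have hlk := (KLower_subset_KLower_iff (by omega) hl).1 h₂₁
    refine ⟨(k, l), ⟨⟨hlk.1, hk⟩, ?_⟩, rfl⟩
    simp only [mem_singleton_iff, Prod.mk.injEq]
    omega

/-- The poset `[2] × K_{n-1}` has exactly `(n+2)(2n+1)` lower sets. -/
theorem stmt9 (n : ℕ) (hn : 2 ≤ n) :
    Set.ncard {I : Set (Fin 2 × KType n) | IsLowerSet I} = (n + 2) * (2 * n + 1) := by
  have hinj : InjOn (Prod.map (KLower n) (KLower n))
      ({q : ℕ × ℕ | q.2 ≤ q.1 ∧ q.1 < 2 * n + 2} \ {(n + 1, n)}) :=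
    ((injOn_KLower (by omega)).prodMap (injOn_KLower (by omega))).mono
      fun _ hq => mem_prod.2 ⟨hq.1.2, hq.1.1.trans_lt hq.1.2⟩
  have hmem : (n + 1, n) ∈ {q : ℕ × ℕ | q.2 ≤ q.1 ∧ q.1 < 2 * n + 2} := ⟨by omega, by omega⟩
  have hchoose : (2 * n + 2 + 1) * (2 * n + 2 + 1 - 1) = 2 * ((n + 2) * (2 * n + 1) + 1) := by
    rw [Nat.add_sub_cancel]
    ring
  rw [ncard_isLowerSet_fin_two_prod, ← image_KLower_pairs hn, hinj.ncard_image,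
    ncard_sdiff_singleton_of_mem hmem, ncard_le_pairs_of_lt, Nat.choose_two_right,
    hchoose, Nat.mul_div_cancel_left _ two_pos, Nat.add_sub_cancel]
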